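/- Suppose 3·t_m ≤ 2·T̂ and there exist m paths, each contained in [0, L] and each of cost at most T̂, that jointly see every target in X. Then the collection V_1, …, V_m produced by the street construction sees every target and each V_i has cost at most 4·T̂. (In particular, applied with T̂ equal to the optimal cost, the street construction is a 4-approximation algorithm for the m-watchmen problem on a chain-visible curve in a street polygon.) -/

import Mathlib

/-!
The cost bound is local: `V i ⊆ [l i, r i]` with `r i ≤ l i + T`, and `V i` has at most
`⌈T / tm⌉ + 2` points, so its cost is at most `2 T + 3 tm ≤ 4 T`.

For coverage, every target with `a x ≤ r i` is seen by one of `V 0, …, V i`. If a target `x` were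
missed, then `r k < a x` for all `k`, and the targets ending at `l k`, together with `x`, are seen
by points `u 0 < ⋯ < u m` of the paths with `u k ∈ (r (k - 1), l k]`. A path of cost at most `T`
spans less than `T` and has fewer than `⌈T / tm⌉` points. So no path reaches across a
non-truncated window, which has length exactly `T` because `r i < a x ≤ L`; and a run of `j - i`
truncated windows puts `(j - i) ⌈T / tm⌉` points of `G*` into `(u i, u j]`, which by minimality
of `G*` the paths must match in `[u i, u j]`, so the run needs more than `j - i` paths of its own.
Altogether more than `m` paths would be needed.
-/

/-- The street construction (Algorithm 2) in the interval model of visibility along a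
chain-visible curve `[0, L]`.  Targets `x ∈ X` have visibility intervals
`[a x, b x] ⊆ [0, L]`.  `Gstar` is a set of minimum cardinality seeing every target.
Starting from `l 0 = min_x b x`, for each `i < m` the algorithm sets
`r i := min (l i + T) L`, collects `W i := Gstar ∩ (l i, r i)`, truncates `W i` to its
`⌈T / tm⌉` smallest elements (redefining `r i` as `max (W i)`) whenever
`|W i| > T / tm`, sets `V i := {l i} ∪ W i ∪ {r i}`, and moves to
`l (i+1) := min {b x : a x > r i}` (or `r i` when no target starts after `r i`). -/
structure StreetData (X : Type*) [Fintype X] [Nonempty X] where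
  a : X → ℝ
  b : X → ℝ
  hab : ∀ x, a x ≤ b x
  L : ℝ
  hL : 0 < L
  ha0 : ∀ x, 0 ≤ a x
  hbL : ∀ x, b x ≤ L
  tm : ℝ
  htm : 0 < tm
  T : ℝ
  hT : 0 < T
  m : ℕ
  hm : 1 ≤ m
  Gstar : Finset ℝ
  hGsub : ↑Gstar ⊆ Set.Icc 0 L
  hGsees : ∀ x, ∃ v ∈ Gstar, a x ≤ v ∧ v ≤ b x
  hGmin : ∀ S : Finset ℝ, ↑S ⊆ Set.Icc 0 L →
    (∀ x, ∃ v ∈ S, a x ≤ v ∧ v ≤ b x) → Gstar.card ≤ S.card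
  l : ℕ → ℝ
  r : ℕ → ℝ
  W : ℕ → Finset ℝ
  V : ℕ → Finset ℝ
  hl0 : IsLeast (Set.range b) (l 0)
  hstep_trunc : ∀ i < m,
    (((Gstar.filter (fun g => l i < g ∧ g < min (l i + T) L)).card : ℝ) > T / tm →
      W i ⊆ Gstar.filter (fun g => l i < g ∧ g < min (l i + T) L) ∧
      (W i).card = ⌈T / tm⌉₊ ∧
      (∀ w ∈ W i, ∀ g ∈ Gstar.filter (fun g => l i < g ∧ g < min (l i + T) L),
        g ≤ w → g ∈ W i) ∧
      IsGreatest (↑(W i) : Set ℝ) (r i))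
  hstep_no_trunc : ∀ i < m,
    (¬ ((Gstar.filter (fun g => l i < g ∧ g < min (l i + T) L)).card : ℝ) > T / tm →
      W i = Gstar.filter (fun g => l i < g ∧ g < min (l i + T) L) ∧
      r i = min (l i + T) L)
  hV : ∀ i < m, V i = insert (l i) (insert (r i) (W i))
  hlsucc_ex : ∀ i < m, (∃ x, r i < a x) →
    IsLeast {t : ℝ | ∃ x, r i < a x ∧ t = b x} (l (i + 1))
  hlsucc_nex : ∀ i < m, (¬ ∃ x, r i < a x) → l (i + 1) = r i

open Finset

section Visibility

variable {X : Type*} (a b : X → ℝ)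

def SeesAll (S : Finset ℝ) : Prop :=
  ∀ x, ∃ v ∈ S, a x ≤ v ∧ v ≤ b x

variable {a b}

/-- Exchange argument: a target seen from `G ∩ (c, d]` is seen from `A ∩ [c, d]`, or, when `A`
sees it only from outside `[c, d]`, from the endpoint `c` or `d`. -/
lemma card_filter_Ioc_le_of_minimal {L : ℝ} {G A : Finset ℝ} (hGsub : ↑G ⊆ Set.Icc 0 L)
    (hGsees : SeesAll a b G)
    (hGmin : ∀ S : Finset ℝ, ↑S ⊆ Set.Icc 0 L → SeesAll a b S → G.card ≤ S.card)
    (hAsub : ↑A ⊆ Set.Icc 0 L) (hAsees : SeesAll a b A) {c d : ℝ} (hc : c ∈ A) (hd : d ∈ A) :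
    (G.filter (· ∈ Set.Ioc c d)).card ≤ (A.filter (· ∈ Set.Icc c d)).card := by
  classical
  set S := G.filter (· ∉ Set.Ioc c d) ∪ A.filter (· ∈ Set.Icc c d)
  have hS_sub : ↑S ⊆ Set.Icc 0 L := by
    intro y hy
    rcases Finset.mem_union.mp hy with hy | hy
    · exact hGsub (Finset.mem_filter.mp hy).1
    · exact hAsub (Finset.mem_filter.mp hy).1
  have hAS : ∀ y ∈ A, y ∈ Set.Icc c d → y ∈ S := fun y hy hyI =>
    Finset.mem_union_right _ (Finset.mem_filter.mpr ⟨hy, hyI⟩)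
  have hS_sees : SeesAll a b S := by
    intro x
    obtain ⟨g, hgG, hag, hgb⟩ := hGsees x
    by_cases hgI : g ∈ Set.Ioc c d
    · obtain ⟨v, hvA, hav, hvb⟩ := hAsees x
      rcases lt_or_ge v c with hvc | hcv
      · exact ⟨c, hAS c hc ⟨le_rfl, hgI.1.le.trans hgI.2⟩, hav.trans hvc.le, hgI.1.le.trans hgb⟩
      rcases le_or_gt v d with hvd | hdv
      · exact ⟨v, hAS v hvA ⟨hcv, hvd⟩, hav, hvb⟩
      · exact ⟨d, hAS d hd ⟨hgI.1.le.trans hgI.2, le_rfl⟩, hag.trans hgI.2, hdv.le.trans hvb⟩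
    · exact ⟨g, Finset.mem_union_left _ (Finset.mem_filter.mpr ⟨hgG, hgI⟩), hag, hgb⟩
  have hsplit := G.card_filter_add_card_filter_not (· ∈ Set.Ioc c d)
  have := (hGmin S hS_sub hS_sees).trans (card_union_le _ _)
  omega

end Visibility

section Paths

variable {U : Finset ℝ} (hne : U.Nonempty) {tm T : ℝ}

lemma sub_lt_of_cost_le (htm : 0 < tm) (hcost : U.max' hne - U.min' hne + U.card * tm ≤ T)
    {y z : ℝ} (hy : y ∈ U) (hz : z ∈ U) : z - y < T := by
  have : (0 : ℝ) < U.card * tm := mul_pos (by exact_mod_cast hne.card_pos) htm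
  linarith [U.min'_le y hy, U.le_max' z hz]

lemma card_lt_ceil_of_cost_le (htm : 0 < tm) (htmT : tm < T)
    (hcost : U.max' hne - U.min' hne + U.card * tm ≤ T) : U.card < ⌈T / tm⌉₊ := by
  rw [Nat.lt_ceil, lt_div_iff₀ htm]
  rcases le_or_gt U.card 1 with h | h
  · have : (U.card : ℝ) ≤ 1 := by exact_mod_cast h
    nlinarith
  · linarith [U.min'_lt_max'_of_card h]

end Paths

section PathsMeeting

variable {ι : Type*} [Fintype ι] (U : ι → Finset ℝ)

open Classical in
noncomputable def pathsMeeting (s : Set ℝ) : Finset ι :=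
  univ.filter fun p => ∃ y ∈ U p, y ∈ s

variable {U}

lemma mem_pathsMeeting {s : Set ℝ} {p : ι} : p ∈ pathsMeeting U s ↔ ∃ y ∈ U p, y ∈ s := by
  simp [pathsMeeting]

lemma pathsMeeting_mono {s t : Set ℝ} (h : s ⊆ t) : pathsMeeting U s ⊆ pathsMeeting U t :=
  fun _ hp ↦
    let ⟨y, hy, hys⟩ := mem_pathsMeeting.mp hp
    mem_pathsMeeting.mpr ⟨y, hy, h hys⟩

lemma disjoint_pathsMeeting_Iic_Ici {T c d : ℝ} (hspan : ∀ p, ∀ y ∈ U p, ∀ z ∈ U p, z - y < T)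
    (hcd : c + T ≤ d) : Disjoint (pathsMeeting U (Set.Iic c)) (pathsMeeting U (Set.Ici d)) := by
  refine Finset.disjoint_left.mpr fun p hpc hpd ↦ ?_
  obtain ⟨y, hy, hyc⟩ := mem_pathsMeeting.mp hpc
  obtain ⟨z, hz, hdz⟩ := mem_pathsMeeting.mp hpd
  linarith [hspan p y hy z hz, Set.mem_Iic.mp hyc, Set.mem_Ici.mp hdz]

lemma card_filter_biUnion_lt {K : ℕ} (hK : ∀ p, (U p).card < K) {s : Set ℝ}
    [DecidablePred (· ∈ s)] (hs : (pathsMeeting U s).Nonempty) :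
    ((univ.biUnion U).filter (· ∈ s)).card < (pathsMeeting U s).card * K := by
  classical
  have hsub : (univ.biUnion U).filter (· ∈ s) ⊆ (pathsMeeting U s).biUnion U := by
    intro y hy
    obtain ⟨hyU, hys⟩ := Finset.mem_filter.mp hy
    obtain ⟨p, -, hyp⟩ := Finset.mem_biUnion.mp hyU
    exact Finset.mem_biUnion.mpr ⟨p, mem_pathsMeeting.mpr ⟨y, hyp, hys⟩, hyp⟩
  calc _ ≤ ((pathsMeeting U s).biUnion U).card := card_le_card hsub
    _ ≤ ∑ p ∈ pathsMeeting U s, (U p).card := card_biUnion_le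
    _ < ∑ _p ∈ pathsMeeting U s, K := sum_lt_sum_of_nonempty hs fun p _ ↦ hK p
    _ = (pathsMeeting U s).card * K := by rw [sum_const, smul_eq_mul]

end PathsMeeting

lemma exists_start_of_run (P : ℕ → Prop) (j : ℕ) :
    ∃ i ≤ j, (∀ i', i = i' + 1 → ¬ P i') ∧ ∀ w, i ≤ w → w < j → P w := by
  induction j with
  | zero => exact ⟨0, le_rfl, by omega, by omega⟩
  | succ j ih =>
    by_cases hj : P j
    · obtain ⟨i, hij, hstart, hrun⟩ := ih
      refine ⟨i, by omega, hstart, fun w hiw hwj ↦ ?_⟩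
      rcases Nat.lt_succ_iff_lt_or_eq.mp hwj with hw | rfl
      exacts [hrun w hiw hw, hj]
    · exact ⟨j + 1, le_rfl, fun i' h ↦ by rwa [Nat.succ_injective h] at hj, by omega⟩

namespace StreetData

variable {X : Type*} [Fintype X] [Nonempty X] (D : StreetData X)

noncomputable def window (i : ℕ) : Finset ℝ :=
  D.Gstar.filter fun g => D.l i < g ∧ g < min (D.l i + D.T) D.L

def Truncated (i : ℕ) : Prop :=
  D.T / D.tm < (D.window i).card

variable {D} {i j : ℕ}

lemma W_subset_window (hi : i < D.m) : D.W i ⊆ D.window i := by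
  by_cases ht : D.Truncated i
  · exact (D.hstep_trunc i hi ht).1
  · exact (D.hstep_no_trunc i hi ht).1.le

lemma card_W_of_truncated (hi : i < D.m) (ht : D.Truncated i) : (D.W i).card = ⌈D.T / D.tm⌉₊ :=
  (D.hstep_trunc i hi ht).2.1

lemma r_eq_of_not_truncated (hi : i < D.m) (ht : ¬ D.Truncated i) :
    D.r i = min (D.l i + D.T) D.L :=
  (D.hstep_no_trunc i hi ht).2

lemma mem_W {g : ℝ} (hi : i < D.m) (hg : g ∈ D.W i) : g ∈ D.Gstar ∧ D.l i < g ∧ g ≤ D.r i := by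
  obtain ⟨hgG, hlg, -⟩ := Finset.mem_filter.mp (W_subset_window hi hg)
  refine ⟨hgG, hlg, ?_⟩
  by_cases ht : D.Truncated i
  · obtain ⟨-, -, -, -, hr_max⟩ := D.hstep_trunc i hi ht
    exact hr_max hg
  · have hW := (D.hstep_no_trunc i hi ht).1
    rw [hW] at hg
    exact (r_eq_of_not_truncated hi ht ▸ (Finset.mem_filter.mp hg).2.2).le

lemma r_le_min (hi : i < D.m) (hlL : D.l i ≤ D.L) :
    D.l i ≤ D.r i ∧ D.r i ≤ min (D.l i + D.T) D.L := by
  by_cases ht : D.Truncated i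
  · obtain ⟨-, -, -, hr, -⟩ := D.hstep_trunc i hi ht
    obtain ⟨-, hlr, hrmin⟩ := Finset.mem_filter.mp (W_subset_window hi hr)
    exact ⟨hlr.le, hrmin.le⟩
  · rw [r_eq_of_not_truncated hi ht]
    exact ⟨le_min (by linarith [D.hT]) hlL, le_rfl⟩

lemma r_le_l_succ (hi : i < D.m) : D.r i ≤ D.l (i + 1) := by
  by_cases hex : ∃ x, D.r i < D.a x
  · obtain ⟨x, hrx, hlx⟩ := (D.hlsucc_ex i hi hex).1
    exact hlx ▸ hrx.le.trans (D.hab x)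
  · exact (D.hlsucc_nex i hi hex).ge

lemma l_le_L (hi : i < D.m) : D.l i ≤ D.L := by
  induction i with
  | zero =>
    obtain ⟨x, hx⟩ := D.hl0.1
    exact hx ▸ D.hbL x
  | succ i ih =>
    have hi' : i < D.m := by omega
    by_cases hex : ∃ x, D.r i < D.a x
    · obtain ⟨x, -, hlx⟩ := (D.hlsucc_ex i hi' hex).1
      exact hlx ▸ D.hbL x
    · rw [D.hlsucc_nex i hi' hex]
      exact (r_le_min hi' (ih hi')).2.trans (min_le_right _ _)

lemma l_le_r (hi : i < D.m) : D.l i ≤ D.r i :=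
  (r_le_min hi (l_le_L hi)).1

lemma r_le_add_T (hi : i < D.m) : D.r i ≤ D.l i + D.T :=
  (r_le_min hi (l_le_L hi)).2.trans (min_le_left _ _)

lemma r_le_l_of_lt (hij : i < j) (hj : j < D.m) : D.r i ≤ D.l j := by
  induction j with
  | zero => omega
  | succ j ih =>
    rcases Nat.lt_succ_iff_lt_or_eq.mp hij with hij | rfl
    · exact (ih hij (by omega)).trans ((l_le_r (by omega)).trans (r_le_l_succ (by omega)))
    · exact r_le_l_succ (by omega)

lemma l_mono (hij : i ≤ j) (hj : j < D.m) : D.l i ≤ D.l j := by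
  rcases hij.lt_or_eq with hij | rfl
  exacts [(l_le_r (hij.trans hj)).trans (r_le_l_of_lt hij hj), le_rfl]

lemma r_mono (hij : i ≤ j) (hj : j < D.m) : D.r i ≤ D.r j := by
  rcases hij.lt_or_eq with hij | rfl
  exacts [(r_le_l_of_lt hij hj).trans (l_le_r hj), le_rfl]

lemma r_eq_add_T_of_not_truncated (hi : i < D.m) (ht : ¬ D.Truncated i) (hrL : D.r i < D.L) :
    D.r i = D.l i + D.T := by
  rw [r_eq_of_not_truncated hi ht] at hrL ⊢
  exact min_eq_left (min_lt_iff.mp hrL |>.resolve_right (lt_irrefl _)).le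

lemma V_subset_Icc (hi : i < D.m) : ↑(D.V i) ⊆ Set.Icc (D.l i) (D.r i) := by
  intro v hv
  rw [Finset.mem_coe, D.hV i hi, Finset.mem_insert, Finset.mem_insert] at hv
  rcases hv with rfl | rfl | hv
  · exact ⟨le_rfl, l_le_r hi⟩
  · exact ⟨l_le_r hi, le_rfl⟩
  · obtain ⟨-, hlv, hvr⟩ := mem_W hi hv
    exact ⟨hlv.le, hvr⟩

lemma card_W_mul_tm_le (hi : i < D.m) : (D.W i).card * D.tm ≤ D.T + D.tm := by
  have htm := D.htm
  by_cases ht : D.Truncated i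
  · rw [card_W_of_truncated hi ht]
    have h := mul_lt_mul_of_pos_right (Nat.ceil_lt_add_one (div_pos D.hT htm).le) htm
    rw [add_mul, div_mul_cancel₀ _ htm.ne', one_mul] at h
    exact h.le
  · have hW : D.W i = D.window i := (D.hstep_no_trunc i hi ht).1
    have h : ((D.window i).card : ℝ) ≤ D.T / D.tm := not_lt.mp ht
    rw [le_div_iff₀ htm] at h
    rw [hW]
    linarith

lemma cost_V_le (hi : i < D.m) (hne : (D.V i).Nonempty) :
    (D.V i).max' hne - (D.V i).min' hne + (D.V i).card * D.tm ≤ 2 * D.T + 3 * D.tm := by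
  have hcard : (D.V i).card ≤ (D.W i).card + 2 := by
    rw [D.hV i hi]
    exact (card_insert_le _ _).trans (Nat.add_le_add_right (card_insert_le _ _) 1)
  have hcardR : ((D.V i).card : ℝ) ≤ (D.W i).card + 2 := by exact_mod_cast hcard
  have hmax := V_subset_Icc hi ((D.V i).max'_mem hne)
  have hmin := V_subset_Icc hi ((D.V i).min'_mem hne)
  nlinarith [card_W_mul_tm_le hi, r_le_add_T hi, D.htm, hmax.2, hmin.1]

lemma mem_W_of_mem_window {g : ℝ} (hi : i < D.m) (hg : g ∈ D.window i) (hgr : g ≤ D.r i) :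
    g ∈ D.W i := by
  by_cases ht : D.Truncated i
  · obtain ⟨-, -, hdown, hr, -⟩ := D.hstep_trunc i hi ht
    exact hdown _ hr g hg hgr
  · exact (D.hstep_no_trunc i hi ht).1 ▸ hg

lemma exists_mem_V_of_l_le_b_of_a_le_r (hi : i < D.m) {x : X} (hlb : D.l i ≤ D.b x)
    (har : D.a x ≤ D.r i) : ∃ v ∈ D.V i, D.a x ≤ v ∧ v ≤ D.b x := by
  rw [D.hV i hi]
  by_cases hal : D.a x ≤ D.l i
  · exact ⟨D.l i, mem_insert_self _ _, hal, hlb⟩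
  by_cases hrb : D.r i ≤ D.b x
  · exact ⟨D.r i, mem_insert_of_mem (mem_insert_self _ _), har, hrb⟩
  rw [not_le] at hal hrb
  obtain ⟨g, hgG, hag, hgb⟩ := D.hGsees x
  have hgr : g < D.r i := hgb.trans_lt hrb
  have hg : g ∈ D.window i := Finset.mem_filter.mpr
    ⟨hgG, hal.trans_le hag, hgr.trans_le (r_le_min hi (l_le_L hi)).2⟩
  exact ⟨g, mem_insert_of_mem (mem_insert_of_mem (mem_W_of_mem_window hi hg hgr.le)), hag, hgb⟩

lemma exists_mem_V_of_a_le_r (hi : i < D.m) {x : X} (har : D.a x ≤ D.r i) :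
    ∃ k < D.m, ∃ v ∈ D.V k, D.a x ≤ v ∧ v ≤ D.b x := by
  induction i with
  | zero => exact ⟨0, hi, exists_mem_V_of_l_le_b_of_a_le_r hi (D.hl0.2 ⟨x, rfl⟩) har⟩
  | succ i ih =>
    by_cases hxi : D.a x ≤ D.r i
    · exact ih (by omega) hxi
    · have hlb := (D.hlsucc_ex i (by omega) ⟨x, not_le.mp hxi⟩).2 ⟨x, not_le.mp hxi, rfl⟩
      exact ⟨i + 1, hi, exists_mem_V_of_l_le_b_of_a_le_r hi hlb har⟩

lemma exists_target_of_forall_r_lt {xs : X} (hxs : ∀ k < D.m, D.r k < D.a xs) {k : ℕ}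
    (hk : k ≤ D.m) : ∃ x, (k < D.m → D.b x ≤ D.l k) ∧ ∀ j < k, D.r j < D.a x := by
  rcases hk.lt_or_eq with hk | rfl
  · cases k with
    | zero =>
      obtain ⟨x, hx⟩ := D.hl0.1
      exact ⟨x, fun _ ↦ hx.le, by omega⟩
    | succ k =>
      obtain ⟨x, hrx, hlx⟩ := (D.hlsucc_ex k (by omega) ⟨xs, hxs k (by omega)⟩).1
      exact ⟨x, fun _ ↦ hlx.ge, fun j hj ↦ (r_mono (Nat.lt_succ_iff.mp hj) (by omega)).trans_lt hrx⟩
  · exact ⟨xs, by omega, hxs⟩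

lemma disjoint_W_of_lt (hij : i < j) (hj : j < D.m) : Disjoint (D.W i) (D.W j) :=
  Finset.disjoint_left.mpr fun _ hgi hgj ↦
    (((mem_W (hij.trans hj) hgi).2.2.trans (r_le_l_of_lt hij hj)).trans_lt
      (mem_W hj hgj).2.1).false

lemma pairwiseDisjoint_W : (Set.Iio D.m).PairwiseDisjoint D.W := by
  intro i hi j hj hij
  rcases hij.lt_or_gt with hij | hji
  exacts [disjoint_W_of_lt hij hj, (disjoint_W_of_lt hji hi).symm]

variable (D) in
/-- For a target missed by all `V k`, `u k` is a path point seeing the target whose interval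
ends at `l k` (for `k < m`), respectively the missed target (for `k = m`). -/
structure IsWitnessSeq {ι : Type*} (U : ι → Finset ℝ) (u : ℕ → ℝ) : Prop where
  mem : ∀ k ≤ D.m, ∃ p, u k ∈ U p
  le_l : ∀ k < D.m, u k ≤ D.l k
  r_lt : ∀ k ≤ D.m, ∀ j < k, D.r j < u k

section Witnesses

variable {ι : Type*} {U : ι → Finset ℝ} {u : ℕ → ℝ}

lemma IsWitnessSeq.monotoneOn (hu : D.IsWitnessSeq U u) : MonotoneOn u (Set.Iic D.m) := by
  intro i _ j hj hij
  rcases hij.lt_or_eq with hij | rfl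
  · exact (hu.le_l i (by grind)).trans ((l_le_r (by grind)).trans (hu.r_lt j hj i hij).le)
  · exact le_rfl

variable [Fintype ι]

lemma IsWitnessSeq.mem_biUnion (hu : D.IsWitnessSeq U u) {k : ℕ} (hk : k ≤ D.m) :
    u k ∈ univ.biUnion U :=
  let ⟨p, hp⟩ := hu.mem k hk
  Finset.mem_biUnion.mpr ⟨p, mem_univ p, hp⟩

lemma sub_lt_card_pathsMeeting_of_truncated (hu : D.IsWitnessSeq U u)
    (hAsub : ↑(univ.biUnion U) ⊆ Set.Icc 0 D.L) (hAsees : SeesAll D.a D.b (univ.biUnion U))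
    (hcap : ∀ p, (U p).card < ⌈D.T / D.tm⌉₊) (hij : i ≤ j) (hj : j ≤ D.m)
    (hrun : ∀ w, i ≤ w → w < j → D.Truncated w) :
    j - i < (pathsMeeting U (Set.Icc (u i) (u j))).card := by
  classical
  have hdisj : (↑(Ico i j) : Set ℕ).PairwiseDisjoint D.W :=
    pairwiseDisjoint_W.subset fun w hw ↦ by
      simp only [coe_Ico, Set.mem_Ico, Set.mem_Iio] at hw ⊢
      omega
  have hsub : (Ico i j).biUnion D.W ⊆ D.Gstar.filter (· ∈ Set.Ioc (u i) (u j)) := by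
    intro g hg
    obtain ⟨w, hw, hgw⟩ := mem_biUnion.mp hg
    obtain ⟨hiw, hwj⟩ := mem_Ico.mp hw
    obtain ⟨hgG, hlg, hgr⟩ := mem_W (by omega) hgw
    exact mem_filter.mpr ⟨hgG, ((hu.le_l i (by omega)).trans (l_mono hiw (by omega))).trans_lt hlg,
      hgr.trans (hu.r_lt j hj w hwj).le⟩
  have hne : (pathsMeeting U (Set.Icc (u i) (u j))).Nonempty :=
    let ⟨p, hp⟩ := hu.mem i (by omega)
    ⟨p, mem_pathsMeeting.mpr ⟨u i, hp, le_rfl, hu.monotoneOn (by grind) hj hij⟩⟩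
  refine Nat.lt_of_mul_lt_mul_right (a := ⌈D.T / D.tm⌉₊) ?_
  calc (j - i) * ⌈D.T / D.tm⌉₊ = ∑ w ∈ Ico i j, (D.W w).card := by
        rw [sum_const_nat fun w hw ↦ card_W_of_truncated (by grind) (hrun w (by grind) (by grind)),
          Nat.card_Ico]
    _ = ((Ico i j).biUnion D.W).card := (card_biUnion hdisj).symm
    _ ≤ (D.Gstar.filter (· ∈ Set.Ioc (u i) (u j))).card := card_le_card hsub
    _ ≤ ((univ.biUnion U).filter (· ∈ Set.Icc (u i) (u j))).card :=
        card_filter_Ioc_le_of_minimal D.hGsub D.hGsees D.hGmin hAsub hAsees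
          (hu.mem_biUnion (by omega)) (hu.mem_biUnion hj)
    _ < _ := card_filter_biUnion_lt hcap hne

/-- Strong induction, splitting `[0, j]` at the last non-truncated window `i - 1` before `j`,
across which no path reaches. -/
lemma lt_card_pathsMeeting_Iic (hu : D.IsWitnessSeq U u)
    (hAsub : ↑(univ.biUnion U) ⊆ Set.Icc 0 D.L) (hAsees : SeesAll D.a D.b (univ.biUnion U))
    (hcap : ∀ p, (U p).card < ⌈D.T / D.tm⌉₊)
    (hspan : ∀ p, ∀ y ∈ U p, ∀ z ∈ U p, z - y < D.T) (hrL : ∀ k < D.m, D.r k < D.L)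
    (hj : j ≤ D.m) : j < (pathsMeeting U (Set.Iic (u j))).card := by
  classical
  induction j using Nat.strong_induction_on with
  | _ j ih =>
  obtain ⟨i, hij, hstart, hrun⟩ := exists_start_of_run D.Truncated j
  have hblock := sub_lt_card_pathsMeeting_of_truncated hu hAsub hAsees hcap hij hj hrun
  have hQ := pathsMeeting_mono (U := U) (Set.Icc_subset_Iic_self (a := u i) (b := u j))
  cases i with
  | zero => exact hblock.trans_le (card_le_card hQ)
  | succ i =>
    have hi : i < D.m := by omega
    have hgap : u i + D.T ≤ u (i + 1) := by
      have := r_eq_add_T_of_not_truncated hi (hstart i rfl) (hrL i hi)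
      linarith [hu.le_l i hi, hu.r_lt (i + 1) (by omega) i (by omega)]
    have hdisj := (disjoint_pathsMeeting_Iic_Ici hspan hgap).mono_right
      (pathsMeeting_mono (U := U) (Set.Icc_subset_Ici_self (a := u j) (b := u (i + 1))))
    have hP := pathsMeeting_mono (U := U)
      (Set.Iic_subset_Iic.mpr (hu.monotoneOn (by grind) hj (by omega : i ≤ j)))
    have := card_le_card (union_subset hP hQ)
    rw [card_union_of_disjoint hdisj] at this
    have := ih i (by omega) (by omega)
    omega

end Witnesses

theorem exists_mem_V_of_paths {ι : Type*} [Fintype ι] (hι : Fintype.card ι ≤ D.m)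
    (htmT : D.tm < D.T) (U : ι → Finset ℝ) (hUne : ∀ p, (U p).Nonempty)
    (hUsub : ∀ p, ↑(U p) ⊆ Set.Icc 0 D.L)
    (hUcost : ∀ p, (U p).max' (hUne p) - (U p).min' (hUne p) + (U p).card * D.tm ≤ D.T)
    (hUsees : ∀ x, ∃ p, ∃ v ∈ U p, D.a x ≤ v ∧ v ≤ D.b x) (x : X) :
    ∃ i < D.m, ∃ v ∈ D.V i, D.a x ≤ v ∧ v ≤ D.b x := by
  by_contra hx
  have hxr : ∀ k < D.m, D.r k < D.a x := fun k hk ↦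
    not_le.mp fun h ↦ hx (exists_mem_V_of_a_le_r hk h)
  have hwit : ∀ k ≤ D.m, ∃ y, (∃ p, y ∈ U p) ∧ (k < D.m → y ≤ D.l k) ∧ ∀ j < k, D.r j < y := by
    intro k hk
    obtain ⟨t, htl, hrt⟩ := exists_target_of_forall_r_lt hxr hk
    obtain ⟨p, y, hy, hty, hyt⟩ := hUsees t
    exact ⟨y, ⟨p, hy⟩, fun hk ↦ hyt.trans (htl hk), fun j hj ↦ (hrt j hj).trans_le hty⟩
  choose! u hu using hwit
  have hw : D.IsWitnessSeq U u :=
    ⟨fun k hk ↦ (hu k hk).1, fun k hk ↦ (hu k hk.le).2.1 hk, fun k hk ↦ (hu k hk).2.2⟩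
  have hAsub : ↑(univ.biUnion U) ⊆ Set.Icc 0 D.L := by
    simpa [Set.iUnion_subset_iff] using hUsub
  have hAsees : SeesAll D.a D.b (univ.biUnion U) := fun t ↦
    let ⟨p, v, hv, hav, hvb⟩ := hUsees t
    ⟨v, Finset.mem_biUnion.mpr ⟨p, mem_univ p, hv⟩, hav, hvb⟩
  have hlt := lt_card_pathsMeeting_Iic hw hAsub hAsees
    (fun p ↦ card_lt_ceil_of_cost_le (hUne p) D.htm htmT (hUcost p))
    (fun p _ hy _ hz ↦ sub_lt_of_cost_le (hUne p) D.htm (hUcost p) hy hz)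
    (fun k hk ↦ (hxr k hk).trans_le ((D.hab x).trans (D.hbL x))) le_rfl
  exact (hlt.trans_le ((card_le_univ _).trans hι)).false

end StreetData

/-- If `3 * tm ≤ 2 * T` and there exist `m` paths in `[0, L]`, each of cost at most `T`,
jointly seeing every target, then the collection `V 1, …, V m` produced by the street
construction sees every target and each `V i` has cost at most `4 * T`: the street
construction is a 4-approximation for the m-watchmen problem on a chain-visible curve. -/
theorem stmt13 {X : Type*} [Fintype X] [Nonempty X] (D : StreetData X)
    (h3 : 3 * D.tm ≤ 2 * D.T)
    (U : Fin D.m → Finset ℝ) (hUne : ∀ i, (U i).Nonempty)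
    (hUsub : ∀ i, ↑(U i) ⊆ Set.Icc 0 D.L)
    (hUcost : ∀ i, (U i).max' (hUne i) - (U i).min' (hUne i) + (U i).card * D.tm ≤ D.T)
    (hUsees : ∀ x : X, ∃ i, ∃ v ∈ U i, D.a x ≤ v ∧ v ≤ D.b x) :
    (∀ x : X, ∃ i < D.m, ∃ v ∈ D.V i, D.a x ≤ v ∧ v ≤ D.b x) ∧
      ∀ i < D.m, ∀ hne : (D.V i).Nonempty,
        (D.V i).max' hne - (D.V i).min' hne + (D.V i).card * D.tm ≤ 4 * D.T := by
  have htmT : D.tm < D.T := by linarith [D.htm]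
  refine ⟨StreetData.exists_mem_V_of_paths (by simp) htmT U hUne hUsub hUcost hUsees,
    fun i hi hne ↦ ?_⟩
  linarith [StreetData.cost_V_le hi hne]
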